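/- Let E be a finite-dimensional real inner product space, let (h₁, …, h_p) be a basis of E with ⟨h_i, h_j⟩ ≤ 0 for all i ≠ j, and let (e₁, …, e_p) be the dual basis, characterized by ⟨h_i, e_j⟩ = 1 if i = j and 0 otherwise. Then ⟨e_i, e_j⟩ ≥ 0 for all i, j. -/

import Mathlib

open scoped RealInnerProductSpace

/-!
Since `⟪b k, e j⟫ = δ_kj`, the inner product `⟪x, e i⟫` is the `i`-th coordinate of `x` in the
basis `b`, so it suffices that every vector `v` with `⟪b k, v⟫ ≥ 0` for all `k` has
nonnegative coordinates. Split `v = x - y` into the parts with positive and negative coordinates.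
As `x` and `y` are nonnegative combinations of disjoint sets of pairwise obtuse vectors,
`⟪y, x⟫ ≤ 0`, while `⟪y, v⟫ ≥ 0`; hence `⟪y, y⟫ = ⟪y, x⟫ - ⟪y, v⟫ ≤ 0`, so `y = 0`.
-/

section

variable {E ι : Type*} [NormedAddCommGroup E] [InnerProductSpace ℝ E] [Fintype ι]

theorem inner_sum_smul_sum_smul_nonpos_of_pairwise {v : ι → E}
    (hv : Pairwise fun i j => ⟪v i, v j⟫ ≤ 0) {f g : ι → ℝ} (hf : ∀ k, 0 ≤ f k)
    (hg : ∀ k, 0 ≤ g k) (hfg : ∀ k, f k = 0 ∨ g k = 0) :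
    ⟪∑ k, f k • v k, ∑ l, g l • v l⟫ ≤ 0 := by
  simp only [sum_inner, inner_sum, real_inner_smul_left, real_inner_smul_right]
  refine Finset.sum_nonpos fun k _ => Finset.sum_nonpos fun l _ => ?_
  rcases eq_or_ne k l with rfl | hkl
  · rcases hfg k with h | h <;> simp [h]
  · exact mul_nonpos_of_nonneg_of_nonpos (hg k)
      (mul_nonpos_of_nonneg_of_nonpos (hf l) (hv hkl.symm))

namespace Module.Basis

theorem repr_nonneg_of_inner_nonneg (b : Basis ι ℝ E) (hb : Pairwise fun i j => ⟪b i, b j⟫ ≤ 0)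
    {v : E} (hv : ∀ k, 0 ≤ ⟪b k, v⟫) (k : ι) : 0 ≤ b.repr v k := by
  set c := b.repr v
  set x := ∑ l, (c l)⁺ • b l
  set y := ∑ l, (c l)⁻ • b l
  have hxy : x - y = v := by
    simp only [x, y, ← Finset.sum_sub_distrib, ← sub_smul, posPart_sub_negPart, c, b.sum_repr]
  have hyx : ⟪y, x⟫ ≤ 0 :=
    inner_sum_smul_sum_smul_nonpos_of_pairwise hb (fun l => negPart_nonneg _)
      (fun l => posPart_nonneg _)
      fun l => (le_total 0 (c l)).imp negPart_eq_zero.2 posPart_eq_zero.2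
  have hyv : 0 ≤ ⟪y, v⟫ := by
    simp only [y, sum_inner, real_inner_smul_left]
    exact Finset.sum_nonneg fun l _ => mul_nonneg (negPart_nonneg _) (hv l)
  have hy : y = 0 := real_inner_self_nonpos.1 <| by
    calc ⟪y, y⟫ = ⟪y, x⟫ - ⟪y, v⟫ := by rw [← inner_sub_right, ← hxy, sub_sub_cancel]
      _ ≤ 0 := by linarith
  have hck := congrFun (b.repr_sum_self fun l => (c l)⁻) k
  rw [show ∑ l, (c l)⁻ • b l = 0 from hy, map_zero, Finsupp.zero_apply, eq_comm] at hck
  exact negPart_eq_zero.1 hck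

theorem repr_apply_eq_inner_of_inner_eq_ite (b : Basis ι ℝ E) [DecidableEq ι] {e : ι → E}
    (he : ∀ i j, ⟪b i, e j⟫ = if i = j then 1 else 0) (x : E) (i : ι) :
    b.repr x i = ⟪x, e i⟫ :=
  calc b.repr x i = ∑ l, b.repr x l * ⟪b l, e i⟫ := by simp [he]
    _ = ⟪x, e i⟫ := by
      conv_rhs => rw [← b.sum_repr x, sum_inner]
      simp only [real_inner_smul_left]

end Module.Basis

end

/-- The dual basis of a basis whose vectors have pairwise nonpositive inner
products has pairwise nonnegative inner products. -/
theorem dual_basis_inner_nonneg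
    {E : Type*} [NormedAddCommGroup E] [InnerProductSpace ℝ E]
    (p : ℕ) (b : Module.Basis (Fin p) ℝ E)
    (hobtuse : ∀ i j : Fin p, i ≠ j → ⟪b i, b j⟫ ≤ 0)
    (e : Fin p → E) (hdual : ∀ i j : Fin p, ⟪b i, e j⟫ = if i = j then 1 else 0) :
    ∀ i j : Fin p, 0 ≤ ⟪e i, e j⟫ := by
  intro i j
  rw [← b.repr_apply_eq_inner_of_inner_eq_ite hdual]
  refine b.repr_nonneg_of_inner_nonneg (fun k l => hobtuse k l) (fun k => ?_) j
  rw [hdual]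
  split_ifs <;> norm_num
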